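/- Let A(z), B(z), P(z) be nonzero polynomials, K ⊂ ℂ compact, λ a positive integer with λ > deg P, and a > 0. Assume B(z) ≠ 0 for all z ∈ K and B(0) = 1. Then for any q ≥ deg B and any p > max{λ + deg A, q + deg P}, there exist c, d ∈ ℂ with |c|, |d| arbitrarily small and nonzero, such that with B̃(z) = B(z) + c z^q and Ã(z) = B̃(z)·P(z) + z^λ A(z) + d z^p, the rational function R(z) = Ã(z)/B̃(z) satisfies: (i) B̃(z) ≠ 0 for all z ∈ K ∪ {0}; (ii) sup_{z∈K} |R(z) − (P(z) + z^λ A(z)/B(z))| < a; (iii) the Taylor coefficients β_ν of R around 0 equal the coefficients of P for all ν ≤ deg P. -/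

import Mathlib

/-!
Perturbing `B` by `c z^q` and adding `d z^p` changes the quotient continuously in `(c, d, z)`, so
by compactness of `K ∪ {0}` both the non-vanishing of `B̃` and the uniform approximation on `K`
survive for all small `(c, d)`. Near `0` the quotient equals `P + z^λ (A + d z^(p-λ)) / B̃` with
the second summand analytic, so its Taylor coefficients below `λ > deg P` are those of `P`.
-/

open Filter Topology Polynomial FormalMultilinearSeries

theorem IsCompact.eventually_forall_dist_lt {X Y Z : Type*} [TopologicalSpace X]
    [TopologicalSpace Y] [PseudoMetricSpace Z] {K : Set Y} (hK : IsCompact K) {F : X → Y → Z}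
    {x₀ : X} (hF : ∀ y ∈ K, ContinuousAt ↿F (x₀, y)) {a : ℝ} (ha : 0 < a) :
    ∀ᶠ x in 𝓝 x₀, ∀ y ∈ K, dist (F x y) (F x₀ y) < a := by
  refine hK.eventually_forall_of_forall_eventually fun y hy => ?_
  have hslice : ContinuousAt (↿F ∘ fun w : X × Y => (x₀, w.2)) (x₀, y) :=
    ContinuousAt.comp (f := fun w : X × Y => (x₀, w.2)) (x := (x₀, y)) (hF y hy)
      (continuous_const.prodMk continuous_snd).continuousAt
  filter_upwards [(hF y hy).eventually (Metric.ball_mem_nhds _ (half_pos ha)),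
    hslice.eventually (Metric.ball_mem_nhds _ (half_pos ha))] with w hw hw₀
  calc dist (F w.1 w.2) (F x₀ w.2)
      ≤ dist (F w.1 w.2) (F x₀ y) + dist (F x₀ w.2) (F x₀ y) := dist_triangle_right _ _ _
    _ < a / 2 + a / 2 := add_lt_add hw hw₀
    _ = a := add_halves a

variable {𝕜 : Type*} [NontriviallyNormedField 𝕜]

theorem Polynomial.eventually_forall_eval_add_C_mul_X_pow_ne_zero {K : Set 𝕜} (hK : IsCompact K)
    {B : 𝕜[X]} (hBK : ∀ z ∈ K, B.eval z ≠ 0) (q : ℕ) :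
    ∀ᶠ c in 𝓝 0, ∀ z ∈ K, (B + C c * X ^ q).eval z ≠ 0 := by
  refine hK.eventually_forall_of_forall_eventually fun y hy => ?_
  have hcont : Continuous fun w : 𝕜 × 𝕜 => (B + C w.1 * X ^ q).eval w.2 := by
    simp only [eval_add, eval_mul, eval_C, eval_pow, eval_X]
    fun_prop
  exact hcont.continuousAt.eventually_ne (by simpa using hBK y hy)

theorem Polynomial.eventually_forall_norm_eval_div_sub_lt {K : Set 𝕜} (hK : IsCompact K)
    {B : 𝕜[X]} (hBK : ∀ z ∈ K, B.eval z ≠ 0) (P Q : 𝕜[X]) (p q : ℕ) {a : ℝ} (ha : 0 < a) :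
    ∀ᶠ cd in 𝓝 (0 : 𝕜 × 𝕜), ∀ z ∈ K,
      ‖((B + C cd.1 * X ^ q) * P + Q + C cd.2 * X ^ p).eval z / (B + C cd.1 * X ^ q).eval z
        - (P.eval z + Q.eval z / B.eval z)‖ < a := by
  set F : 𝕜 × 𝕜 → 𝕜 → 𝕜 := fun cd z =>
    ((B + C cd.1 * X ^ q) * P + Q + C cd.2 * X ^ p).eval z / (B + C cd.1 * X ^ q).eval z
  have hcont : ∀ y ∈ K, ContinuousAt ↿F (0, y) := by
    intro y hy
    simp only [F, eval_add, eval_mul, eval_C, eval_pow, eval_X]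
    fun_prop (disch := simpa using hBK y hy)
  filter_upwards [hK.eventually_forall_dist_lt hcont ha] with cd hcd z hz
  have hF0 : F 0 z = P.eval z + Q.eval z / B.eval z := by
    simp only [F, Prod.fst_zero, Prod.snd_zero, map_zero, eval_zero, zero_mul, add_zero, eval_add,
      eval_mul]
    field_simp [hBK z hz]
  rw [← hF0, ← dist_eq_norm]
  exact hcd z hz

theorem Polynomial.hasFPowerSeriesAt_eval (P : 𝕜[X]) :
    HasFPowerSeriesAt (fun z => P.eval z) (ofScalars 𝕜 P.coeff) 0 := by
  refine hasFPowerSeriesAt_iff.mpr (Eventually.of_forall fun z => ?_)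
  simp only [coeff_ofScalars, zero_add, smul_eq_mul]
  have hsum : P.eval z = ∑ n ∈ P.support, z ^ n * P.coeff n := by
    simp only [eval_eq_sum, Polynomial.sum_def, mul_comm]
  rw [hsum]
  exact hasSum_sum_of_ne_finset_zero fun n hn => by rw [notMem_support_iff.mp hn, mul_zero]

theorem HasFPowerSeriesAt.pow_mul {f : 𝕜 → 𝕜} {ps : FormalMultilinearSeries 𝕜 𝕜 𝕜}
    (hf : HasFPowerSeriesAt f ps 0) (n : ℕ) :
    HasFPowerSeriesAt (fun z => z ^ n * f z)
      (ofScalars 𝕜 fun k => if n ≤ k then ps.coeff (k - n) else 0) 0 := by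
  rw [hasFPowerSeriesAt_iff] at hf ⊢
  filter_upwards [hf] with z hz
  simp only [coeff_ofScalars, zero_add, smul_eq_mul] at hz ⊢
  rw [← hasSum_nat_add_iff' n, Finset.sum_eq_zero fun k hk => by
    rw [if_neg (by simpa using hk), mul_zero], sub_zero]
  simpa [pow_add, mul_assoc, mul_left_comm] using hz.mul_left (z ^ n)

theorem Polynomial.exists_hasFPowerSeriesAt_eval_div_eval (P D N : 𝕜[X]) (hD : D.eval 0 ≠ 0)
    (n : ℕ) :
    ∃ ps : FormalMultilinearSeries 𝕜 𝕜 𝕜,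
      HasFPowerSeriesAt (fun z => (D * P + X ^ n * N).eval z / D.eval z) ps 0 ∧
      ∀ k < n, ps.coeff k = P.coeff k := by
  obtain ⟨ps, hps⟩ : AnalyticAt 𝕜 (fun z => N.eval z / D.eval z) 0 :=
    (AnalyticOnNhd.eval_polynomial N 0 trivial).div
      (AnalyticOnNhd.eval_polynomial D 0 trivial) hD
  refine ⟨_, (P.hasFPowerSeriesAt_eval.add (hps.pow_mul n)).congr ?_, fun k hk => ?_⟩
  · filter_upwards [D.continuous.continuousAt.eventually_ne hD] with z hz
    simp only [Pi.add_apply, eval_add, eval_mul, eval_pow, eval_X]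
    field_simp
  · rw [← ofScalars_add, coeff_ofScalars, Pi.add_apply, if_neg (not_le.mpr hk), add_zero]

theorem lemma_2_5_general (A B P : Polynomial ℂ)
    (K : Set ℂ) (hK : IsCompact K) (lam : ℕ) (hlam : P.natDegree < lam)
    (a : ℝ) (ha : 0 < a)
    (hBK : ∀ z ∈ K, B.eval z ≠ 0) (hB0 : B.eval 0 = 1)
    (p q : ℕ)
    (hp : max (lam + A.natDegree) (q + P.natDegree) < p) :
    ∀ ε > (0:ℝ), ∃ c d : ℂ, c ≠ 0 ∧ d ≠ 0 ∧ ‖c‖ < ε ∧ ‖d‖ < ε ∧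
      (∀ z ∈ K ∪ {0}, (B + C c * X ^ q).eval z ≠ 0) ∧
      (∀ z ∈ K,
        ‖((B + C c * X ^ q) * P + X ^ lam * A + C d * X ^ p).eval z /
            (B + C c * X ^ q).eval z
          - (P.eval z + z ^ lam * A.eval z / B.eval z)‖ < a) ∧
      ∃ ps : FormalMultilinearSeries ℂ ℂ ℂ,
        HasFPowerSeriesAt
          (fun z => ((B + C c * X ^ q) * P + X ^ lam * A + C d * X ^ p).eval z /
            (B + C c * X ^ q).eval z) ps 0 ∧
        ∀ ν ≤ P.natDegree, ps.coeff ν = P.coeff ν := by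
  intro ε hε
  have hBK0 : ∀ z ∈ K ∪ {0}, B.eval z ≠ 0 := by
    rintro z (hz | rfl)
    exacts [hBK z hz, by simp [hB0]]
  have hsmall : ∀ᶠ c in 𝓝[≠] (0 : ℂ), c ≠ 0 ∧ ‖c‖ < ε :=
    eventually_mem_nhdsWithin.and
      ((by simpa using eventually_norm_sub_lt (0 : ℂ) hε : ∀ᶠ c in 𝓝 (0 : ℂ), ‖c‖ < ε)
        |>.filter_mono nhdsWithin_le_nhds)
  have hdiag : Tendsto (fun c : ℂ => (c, c)) (𝓝[≠] 0) (𝓝 0) :=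
    ((continuous_id.prodMk continuous_id).tendsto' 0 0 rfl).mono_left nhdsWithin_le_nhds
  obtain ⟨c, ⟨hc0, hcε⟩, hBt, happrox⟩ := (hsmall.and <|
    (eventually_forall_eval_add_C_mul_X_pow_ne_zero (hK.union isCompact_singleton) hBK0 q
      |>.filter_mono nhdsWithin_le_nhds).and <|
    hdiag.eventually <| eventually_forall_norm_eval_div_sub_lt hK hBK P (X ^ lam * A) p q ha).exists
  refine ⟨c, c, hc0, hc0, hcε, hcε, hBt, fun z hz => by simpa using happrox z hz, ?_⟩
  have hlam_p : lam ≤ p := by omega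
  have hsplit : X ^ lam * A + C c * X ^ p = X ^ lam * (A + C c * X ^ (p - lam)) := by
    rw [mul_add, mul_left_comm, ← pow_add, Nat.add_sub_cancel' hlam_p]
  obtain ⟨ps, hps, hcoeff⟩ := exists_hasFPowerSeriesAt_eval_div_eval P (B + C c * X ^ q)
    (A + C c * X ^ (p - lam)) (hBt 0 (by simp)) lam
  simp only [add_assoc, hsplit]
  exact ⟨ps, hps, fun ν hν => hcoeff ν (hν.trans_lt hlam)⟩

open Polynomial in
theorem lemma_2_5 (A B P : Polynomial ℂ) (hA : A ≠ 0) (hB : B ≠ 0) (hP : P ≠ 0)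
    (K : Set ℂ) (hK : IsCompact K) (lam : ℕ) (hlam : P.natDegree < lam)
    (a : ℝ) (ha : 0 < a)
    (hBK : ∀ z ∈ K, B.eval z ≠ 0) (hB0 : B.eval 0 = 1)
    (p q : ℕ) (hqB : B.natDegree ≤ q)
    (hp : max (lam + A.natDegree) (q + P.natDegree) < p) :
    ∀ ε > (0:ℝ), ∃ c d : ℂ, c ≠ 0 ∧ d ≠ 0 ∧ ‖c‖ < ε ∧ ‖d‖ < ε ∧
      (∀ z ∈ K ∪ {0}, (B + C c * X ^ q).eval z ≠ 0) ∧
      (∀ z ∈ K,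
        ‖((B + C c * X ^ q) * P + X ^ lam * A + C d * X ^ p).eval z /
            (B + C c * X ^ q).eval z
          - (P.eval z + z ^ lam * A.eval z / B.eval z)‖ < a) ∧
      ∃ ps : FormalMultilinearSeries ℂ ℂ ℂ,
        HasFPowerSeriesAt
          (fun z => ((B + C c * X ^ q) * P + X ^ lam * A + C d * X ^ p).eval z /
            (B + C c * X ^ q).eval z) ps 0 ∧
        ∀ ν ≤ P.natDegree, ps.coeff ν = P.coeff ν :=
  lemma_2_5_general A B P K hK lam hlam a ha hBK hB0 p q hp
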